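/- arXiv:2007.00353 — 4 statements merged into one kernel-verified Lean document; each statement's English description precedes it below -/
import Mathlib

section
/- Let λ, σ > 0 and for k, ξ ∈ ℝ^d set ξ(r) = (ξ − k/λ)e^{−λr} + k/λ. Then with c = 1 − √3/2 one has, for all t ≥ 0 and all k, ξ ∈ ℝ^d: exp(−(σ²/2)∫₀^t |ξ(r)|² dr) ≤ exp( −c(σ²/2)·( |k|² ∫₀^t ((1−e^{−λr})/λ)² dr + |ξ|² ∫₀^t e^{−2λr} dr ) ). -/
open Real MeasureTheory

/-!
Write `ξ(r) = e^{-λr} ξ + b(r) k` with `b(r) = (1 - e^{-λr}) / λ`. Then `∫₀ᵗ |ξ(r)|² dr` is the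
quadratic form `A |ξ|² + 2 C ⟪ξ, k⟫ + B |k|²` with `A = ∫ e^{-2λr}`, `B = ∫ b²`, `C = ∫ e^{-λr} b`,
and such a form is at least `(1 - θ) (A |ξ|² + B |k|²)` as soon as `C² ≤ θ² A B`.
With `u = 1 - e^{-λt}` one computes `A = u (2 - u) / (2λ)`, `C = u² / (2λ²)` and
`λ³ B = λt - u - u² / 2`; since `λt = -log (1 - u) ≥ u + u²/2 + ⋯ + u⁵/5`, this gives
`4 C² ≤ 3 A B`, that is `θ = √3 / 2`.
-/

theorem quadratic_form_lower_bound {E : Type*} [NormedAddCommGroup E] [InnerProductSpace ℝ E]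
    {A B C θ : ℝ} (hA : 0 ≤ A) (hB : 0 ≤ B) (hθ : 0 ≤ θ) (hC : C ^ 2 ≤ θ ^ 2 * (A * B))
    (x y : E) :
    (1 - θ) * (A * ‖x‖ ^ 2 + B * ‖y‖ ^ 2) ≤ A * ‖x‖ ^ 2 + 2 * C * inner ℝ x y + B * ‖y‖ ^ 2 := by
  set X := ‖x‖
  set Y := ‖y‖
  have hcross : 2 * |C| * (X * Y) ≤ θ * (A * X ^ 2 + B * Y ^ 2) := by
    refine abs_le_of_sq_le_sq' ?_ (by positivity) |>.2
    calc (2 * |C| * (X * Y)) ^ 2 = 4 * C ^ 2 * (X * Y) ^ 2 := by rw [mul_pow, mul_pow, sq_abs]; ring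
      _ ≤ 4 * (θ ^ 2 * (A * B)) * (X * Y) ^ 2 := by gcongr
      _ ≤ (θ * (A * X ^ 2 + B * Y ^ 2)) ^ 2 := by
        nlinarith [mul_nonneg (sq_nonneg θ) (sq_nonneg (A * X ^ 2 - B * Y ^ 2))]
  have hinner : -(2 * C * inner ℝ x y) ≤ 2 * |C| * (X * Y) :=
    calc -(2 * C * inner ℝ x y) ≤ |2 * C * inner ℝ x y| := neg_le_abs _
      _ = 2 * |C| * |inner ℝ x y| := by rw [abs_mul, abs_mul, abs_two]
      _ ≤ 2 * |C| * (X * Y) := by gcongr; exact abs_real_inner_le_norm x y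
  linarith

theorem integral_norm_sq_smul_add_smul {E : Type*} [NormedAddCommGroup E] [InnerProductSpace ℝ E]
    {f g : ℝ → ℝ} (hf : Continuous f) (hg : Continuous g) (x y : E) (a b : ℝ) :
    ∫ r in a..b, ‖f r • x + g r • y‖ ^ 2
      = ‖x‖ ^ 2 * (∫ r in a..b, f r ^ 2) + 2 * inner ℝ x y * (∫ r in a..b, f r * g r)
        + ‖y‖ ^ 2 * ∫ r in a..b, g r ^ 2 := by
  have hexpand : ∀ r, ‖f r • x + g r • y‖ ^ 2
      = ‖x‖ ^ 2 * f r ^ 2 + 2 * inner ℝ x y * (f r * g r) + ‖y‖ ^ 2 * g r ^ 2 := by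
    intro r
    rw [norm_add_sq_real, norm_smul, norm_smul, real_inner_smul_left, real_inner_smul_right,
      mul_pow, mul_pow, Real.norm_eq_abs, Real.norm_eq_abs, sq_abs, sq_abs]
    ring
  simp_rw [hexpand]
  rw [intervalIntegral.integral_add, intervalIntegral.integral_add,
    intervalIntegral.integral_const_mul, intervalIntegral.integral_const_mul,
    intervalIntegral.integral_const_mul]
  all_goals exact Continuous.intervalIntegrable (by fun_prop) _ _

theorem sum_range_pow_succ_div_le_neg_log_one_sub {x : ℝ} (hx₀ : 0 ≤ x) (hx₁ : x < 1) (n : ℕ) :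
    ∑ i ∈ Finset.range n, x ^ (i + 1) / (i + 1) ≤ -log (1 - x) :=
  sum_le_hasSum _ (fun i _ => by positivity)
    (hasSum_pow_div_log_of_abs_lt_one (by rwa [abs_of_nonneg hx₀]))

theorem integral_quadratic_exp_neg_mul {μ : ℝ} (hμ : μ ≠ 0) (c₀ c₁ c₂ t : ℝ) :
    ∫ r in (0:ℝ)..t, (c₀ + c₁ * exp (-μ * r) + c₂ * exp (-μ * r) ^ 2)
      = c₀ * t + c₁ * (1 - exp (-μ * t)) / μ + c₂ * (1 - exp (-μ * t) ^ 2) / (2 * μ) := by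
  have hderiv : ∀ r, HasDerivAt
      (fun r => c₀ * r - c₁ * exp (-μ * r) / μ - c₂ * exp (-μ * r) ^ 2 / (2 * μ))
      (c₀ + c₁ * exp (-μ * r) + c₂ * exp (-μ * r) ^ 2) r := by
    intro r
    have he : HasDerivAt (fun r => exp (-μ * r)) (-μ * exp (-μ * r)) r := by
      simpa [mul_comm] using ((hasDerivAt_id r).const_mul (-μ)).exp
    refine ((((hasDerivAt_id r).const_mul c₀).sub ((he.const_mul c₁).div_const μ)).sub
      (((he.pow 2).const_mul c₂).div_const (2 * μ))).congr_deriv ?_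
    field_simp
    ring
  rw [intervalIntegral.integral_eq_sub_of_hasDerivAt (fun r _ => hderiv r)
    (Continuous.intervalIntegrable (by fun_prop) _ _)]
  simp only [mul_zero, neg_mul, exp_zero]
  field_simp
  ring

theorem integral_exp_neg_mul_sq {lam : ℝ} (hlam : lam ≠ 0) (t : ℝ) :
    ∫ r in (0:ℝ)..t, exp (-lam * r) ^ 2 = (1 - exp (-lam * t) ^ 2) / (2 * lam) := by
  simpa using integral_quadratic_exp_neg_mul hlam 0 0 1 t

theorem integral_exp_neg_mul_mul_one_sub_exp {lam : ℝ} (hlam : lam ≠ 0) (t : ℝ) :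
    ∫ r in (0:ℝ)..t, exp (-lam * r) * ((1 - exp (-lam * r)) / lam)
      = (1 - exp (-lam * t)) ^ 2 / (2 * lam ^ 2) := by
  have hexpand : ∀ r, exp (-lam * r) * ((1 - exp (-lam * r)) / lam)
      = 0 + lam⁻¹ * exp (-lam * r) + (-lam⁻¹) * exp (-lam * r) ^ 2 := by
    intro r; field_simp; ring
  simp_rw [hexpand, integral_quadratic_exp_neg_mul hlam]
  field_simp
  ring

theorem integral_one_sub_exp_neg_mul_div_sq {lam : ℝ} (hlam : lam ≠ 0) (t : ℝ) :
    ∫ r in (0:ℝ)..t, ((1 - exp (-lam * r)) / lam) ^ 2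
      = (lam * t - 2 * (1 - exp (-lam * t)) + (1 - exp (-lam * t) ^ 2) / 2) / lam ^ 3 := by
  have hexpand : ∀ r, ((1 - exp (-lam * r)) / lam) ^ 2
      = (lam ^ 2)⁻¹ + (-2 / lam ^ 2) * exp (-lam * r) + (lam ^ 2)⁻¹ * exp (-lam * r) ^ 2 := by
    intro r; field_simp; ring
  simp_rw [hexpand, integral_quadratic_exp_neg_mul hlam]
  field_simp
  ring

theorem integral_cross_sq_le {lam : ℝ} (hlam : 0 < lam) {t : ℝ} (ht : 0 ≤ t) :
    (∫ r in (0:ℝ)..t, exp (-lam * r) * ((1 - exp (-lam * r)) / lam)) ^ 2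
      ≤ (√3 / 2) ^ 2 * ((∫ r in (0:ℝ)..t, exp (-lam * r) ^ 2)
          * ∫ r in (0:ℝ)..t, ((1 - exp (-lam * r)) / lam) ^ 2) := by
  rw [integral_exp_neg_mul_mul_one_sub_exp hlam.ne', integral_exp_neg_mul_sq hlam.ne',
    integral_one_sub_exp_neg_mul_div_sq hlam.ne']
  obtain ⟨u, hu⟩ : ∃ u, exp (-lam * t) = 1 - u := ⟨1 - exp (-lam * t), by ring⟩
  have hu₀ : 0 ≤ u := by
    have : exp (-lam * t) ≤ 1 := exp_le_one_iff.2 (by nlinarith)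
    linarith
  have hu₁ : u < 1 := by linarith [exp_pos (-lam * t)]
  have hlog : u + u ^ 2 / 2 + u ^ 3 / 3 + u ^ 4 / 4 + u ^ 5 / 5 ≤ lam * t := by
    have := sum_range_pow_succ_div_le_neg_log_one_sub hu₀ hu₁ 5
    rw [← hu, log_exp] at this
    norm_num [Finset.sum_range_succ] at this
    linarith
  have hpoly : u ^ 4 ≤ 3 / 2 * (u * (2 - u)) * (lam * t - u - u ^ 2 / 2) := by
    have hp : 1 ≤ 3 / 2 * (2 - u) * (1 / 3 + u / 4 + u ^ 2 / 5) := by nlinarith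
    have hB : u ^ 3 * (1 / 3 + u / 4 + u ^ 2 / 5) ≤ lam * t - u - u ^ 2 / 2 := by linarith
    calc u ^ 4 ≤ u ^ 4 * (3 / 2 * (2 - u) * (1 / 3 + u / 4 + u ^ 2 / 5)) :=
          le_mul_of_one_le_right (by positivity) hp
      _ = 3 / 2 * (u * (2 - u)) * (u ^ 3 * (1 / 3 + u / 4 + u ^ 2 / 5)) := by ring
      _ ≤ 3 / 2 * (u * (2 - u)) * (lam * t - u - u ^ 2 / 2) := by
          gcongr
          nlinarith
  rw [hu]
  calc ((1 - (1 - u)) ^ 2 / (2 * lam ^ 2)) ^ 2 = u ^ 4 / (4 * lam ^ 4) := by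
        field_simp; ring
    _ ≤ 3 / 2 * (u * (2 - u)) * (lam * t - u - u ^ 2 / 2) / (4 * lam ^ 4) := by gcongr
    _ = _ := by rw [div_pow, sq_sqrt (by norm_num)]; field_simp; ring

theorem stmt_7_general (d : ℕ) (lam sig : ℝ) (hlam : 0 < lam)
    (k ξ : EuclideanSpace ℝ (Fin d)) (t : ℝ) (ht : 0 ≤ t)
    (Ξ : ℝ → EuclideanSpace ℝ (Fin d))
    (hΞ : ∀ r, Ξ r = Real.exp (-lam * r) • (ξ - lam⁻¹ • k) + lam⁻¹ • k) :
    Real.exp (-(sig ^ 2 / 2) * ∫ r in (0:ℝ)..t, ‖Ξ r‖ ^ 2)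
      ≤ Real.exp (-((1 - Real.sqrt 3 / 2) * (sig ^ 2 / 2)) *
          (‖k‖ ^ 2 * (∫ r in (0:ℝ)..t, ((1 - Real.exp (-lam * r)) / lam) ^ 2)
            + ‖ξ‖ ^ 2 * ∫ r in (0:ℝ)..t, Real.exp (-2 * lam * r))) := by
  have hΞ_split : ∀ r, Ξ r = exp (-lam * r) • ξ + ((1 - exp (-lam * r)) / lam) • k := by
    intro r; rw [hΞ]; module
  have hexp_two : ∀ r, exp (-2 * lam * r) = exp (-lam * r) ^ 2 := by
    intro r; rw [← exp_nat_mul]; ring_nf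
  have hbound := quadratic_form_lower_bound
    (intervalIntegral.integral_nonneg ht fun r _ => sq_nonneg _)
    (intervalIntegral.integral_nonneg ht fun r _ => sq_nonneg _)
    (by positivity) (integral_cross_sq_le hlam ht) ξ k
  simp_rw [hΞ_split, hexp_two]
  rw [exp_le_exp, integral_norm_sq_smul_add_smul (by fun_prop) (by fun_prop)]
  linarith [mul_le_mul_of_nonneg_left hbound (by positivity : (0:ℝ) ≤ sig ^ 2 / 2)]

/-- hypoelliptic Schauder-type bound
`exp(-(σ²/2)∫₀^t |ξ(r)|² dr) ≤ exp(-c(σ²/2)(|k|²∫₀^t((1-e^{-λr})/λ)²dr + |ξ|²∫₀^t e^{-2λr}dr))`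
with `c = 1 - √3/2`, where `ξ(r) = (ξ - k/λ)e^{-λr} + k/λ`. -/
theorem stmt_7 (d : ℕ) (lam sig : ℝ) (hlam : 0 < lam) (hsig : 0 < sig)
    (k ξ : EuclideanSpace ℝ (Fin d)) (t : ℝ) (ht : 0 ≤ t)
    (Ξ : ℝ → EuclideanSpace ℝ (Fin d))
    (hΞ : ∀ r, Ξ r = Real.exp (-lam * r) • (ξ - lam⁻¹ • k) + lam⁻¹ • k) :
    Real.exp (-(sig ^ 2 / 2) * ∫ r in (0:ℝ)..t, ‖Ξ r‖ ^ 2)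
      ≤ Real.exp (-((1 - Real.sqrt 3 / 2) * (sig ^ 2 / 2)) *
          (‖k‖ ^ 2 * (∫ r in (0:ℝ)..t, ((1 - Real.exp (-lam * r)) / lam) ^ 2)
            + ‖ξ‖ ^ 2 * ∫ r in (0:ℝ)..t, Real.exp (-2 * lam * r))) :=
  stmt_7_general d lam sig hlam k ξ t ht Ξ hΞ
end

section
/- Let λ, σ > 0 and for k, ξ ∈ ℝ^d set ξ(r) = (ξ − k/λ)e^{−λr} + k/λ. For every integer n ≥ 0 there is a constant C_n (depending on n and λ but not on σ, t, k, ξ) such that for all t > 0 and all k, ξ ∈ ℝ^d: |ξ(t)| · ( ∫₀^t |ξ(r)| dr )^n · exp( −(σ²/2)∫₀^t |ξ(r)|² dr ) ≤ C_n · t^{(n−1)/2} / σ^{n+1}. -/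
/-!
Write `ξ(r) = e^{-λr} v + w`. As `ξ(r)` is affine in `e^{-λr}` and `r ↦ e^{-λr}` is convex, the
endpoint is controlled by earlier points: `|ξ(t)| ≤ |ξ(s)| + 2 |ξ(s + 2t/3)|` for `s ∈ [0, t/3]`.
Averaging over `s` gives `t |ξ(t)|² ≤ 24 I₂`, where `I₂ = ∫₀ᵗ |ξ(r)|² dr`, and Cauchy–Schwarz gives
`(∫₀ᵗ |ξ(r)| dr)² ≤ t I₂`. Hence the square of the left side is at most `24 tⁿ⁻¹ I₂ⁿ⁺¹ e^{-σ² I₂}`,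
and `yᵐ e^{-y} ≤ m!` bounds this by `24 (n+1)! tⁿ⁻¹ / σ²⁽ⁿ⁺¹⁾`.
-/

open Real MeasureTheory Set
open scoped Nat

theorem norm_smul_add_le_of_sub_le {E : Type*} [SeminormedAddCommGroup E] [NormedSpace ℝ E]
    (v w : E) {s₁ s₂ s₃ : ℝ} (h₃₂ : s₃ ≤ s₂) (h : s₂ - s₃ ≤ s₁ - s₂) :
    ‖s₃ • v + w‖ ≤ ‖s₁ • v + w‖ + 2 * ‖s₂ • v + w‖ := by
  rcases h₃₂.eq_or_lt with rfl | h₃₂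
  · linarith [norm_nonneg (s₁ • v + w), norm_nonneg (s₃ • v + w)]
  have hpos : 0 < s₁ - s₂ := by linarith
  have hcomb : (s₁ - s₂) • (s₃ • v + w) = (s₃ - s₂) • (s₁ • v + w) + (s₁ - s₃) • (s₂ • v + w) := by
    module
  have key : (s₁ - s₂) * ‖s₃ • v + w‖ ≤ (s₂ - s₃) * ‖s₁ • v + w‖ + (s₁ - s₃) * ‖s₂ • v + w‖ := by
    calc (s₁ - s₂) * ‖s₃ • v + w‖ = ‖(s₃ - s₂) • (s₁ • v + w) + (s₁ - s₃) • (s₂ • v + w)‖ := by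
          rw [← hcomb, norm_smul, Real.norm_of_nonneg hpos.le]
      _ ≤ _ := by
          refine (norm_add_le _ _).trans_eq ?_
          rw [norm_smul, norm_smul, Real.norm_eq_abs, Real.norm_eq_abs, abs_sub_comm,
            abs_of_pos (by linarith), abs_of_pos (by linarith)]
  refine le_of_mul_le_mul_left ?_ hpos
  nlinarith [norm_nonneg (s₁ • v + w), norm_nonneg (s₂ • v + w)]

theorem two_mul_exp_le_exp_add_exp {x y z : ℝ} (h : x + y ≤ 2 * z) :
    2 * exp (-z) ≤ exp (-x) + exp (-y) := by
  have hmid : exp (-z) ≤ exp (-x / 2) * exp (-y / 2) := by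
    rw [← exp_add, exp_le_exp]; linarith
  have hx : exp (-x) = exp (-x / 2) ^ 2 := by rw [← exp_nat_mul]; ring_nf
  have hy : exp (-y) = exp (-y / 2) ^ 2 := by rw [← exp_nat_mul]; ring_nf
  rw [hx, hy]
  nlinarith [sq_nonneg (exp (-x / 2) - exp (-y / 2))]

theorem norm_exp_smul_add_le {E : Type*} [SeminormedAddCommGroup E] [NormedSpace ℝ E]
    (v w : E) {lam r₁ r₂ r₃ : ℝ} (hlam : 0 ≤ lam) (h₂₃ : r₂ ≤ r₃) (h : r₁ + r₃ ≤ 2 * r₂) :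
    ‖exp (-lam * r₃) • v + w‖ ≤ ‖exp (-lam * r₁) • v + w‖ + 2 * ‖exp (-lam * r₂) • v + w‖ := by
  refine norm_smul_add_le_of_sub_le v w (exp_le_exp.2 ?_) ?_
  · nlinarith
  · have := two_mul_exp_le_exp_add_exp (x := lam * r₁) (y := lam * r₃) (z := lam * r₂)
      (by nlinarith)
    simp only [neg_mul]
    linarith

theorem mul_le_integral_of_forall_le {f : ℝ → ℝ} {a b c : ℝ} (hab : a ≤ b)
    (hf : IntervalIntegrable f volume a b) (h : ∀ x ∈ Icc a b, c ≤ f x) :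
    (b - a) * c ≤ ∫ x in a..b, f x := by
  simpa using intervalIntegral.integral_mono_on hab intervalIntegrable_const hf h

theorem sq_integral_le_mul_integral_sq {f : ℝ → ℝ} (hf : Continuous f) {a b : ℝ} (hab : a ≤ b) :
    (∫ x in a..b, f x) ^ 2 ≤ (b - a) * ∫ x in a..b, f x ^ 2 := by
  have hquad : ∀ s, 0 ≤ (b - a) * (s * s) + (-2 * ∫ x in a..b, f x) * s + ∫ x in a..b, f x ^ 2 := by
    intro s
    have hexp : ∫ x in a..b, (f x - s) ^ 2
        = (b - a) * (s * s) + (-2 * ∫ x in a..b, f x) * s + ∫ x in a..b, f x ^ 2 := by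
      have hint {g : ℝ → ℝ} (hg : Continuous g) : IntervalIntegrable g volume a b :=
        hg.intervalIntegrable a b
      simp only [sub_sq]
      rw [intervalIntegral.integral_add (hint (by fun_prop)) intervalIntegrable_const,
        intervalIntegral.integral_sub (hint (by fun_prop)) (hint (by fun_prop)),
        intervalIntegral.integral_mul_const, intervalIntegral.integral_const_mul]
      simp only [intervalIntegral.integral_const, smul_eq_mul]
      ring
    rw [← hexp]
    exact intervalIntegral.integral_nonneg hab fun x _ => sq_nonneg _
  have := discrim_le_zero hquad
  rw [discrim] at this
  linarith

theorem mul_le_integral_of_le_add_shift {g : ℝ → ℝ} (hg : Continuous g) (hg₀ : ∀ x, 0 ≤ g x)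
    {t c : ℝ} (ht : 0 ≤ t) (h : ∀ s ∈ Icc 0 (t / 3), c ≤ 2 * g s + 8 * g (s + 2 * t / 3)) :
    t * c ≤ 24 * ∫ x in 0..t, g x := by
  have hint (a b : ℝ) : IntervalIntegrable g volume a b := hg.intervalIntegrable a b
  have hshift : Continuous fun s => g (s + 2 * t / 3) := by fun_prop
  have hthirds := mul_le_integral_of_forall_le (by linarith)
    (((hint _ _).const_mul 2).add ((hshift.intervalIntegrable _ _).const_mul 8)) h
  rw [intervalIntegral.integral_add ((hint _ _).const_mul 2)
      ((hshift.intervalIntegrable _ _).const_mul 8),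
    intervalIntegral.integral_const_mul, intervalIntegral.integral_const_mul,
    intervalIntegral.integral_comp_add_right g, zero_add, show t / 3 + 2 * t / 3 = t by ring]
    at hthirds
  have hsplit : ∫ x in 0..t, g x
      = (∫ x in 0..t / 3, g x) + (∫ x in t / 3..2 * t / 3, g x) + ∫ x in 2 * t / 3..t, g x := by
    rw [intervalIntegral.integral_add_adjacent_intervals (hint _ _) (hint _ _),
      intervalIntegral.integral_add_adjacent_intervals (hint _ _) (hint _ _)]
  have h₁ : 0 ≤ ∫ x in 0..t / 3, g x :=
    intervalIntegral.integral_nonneg (by linarith) fun x _ => hg₀ x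
  have h₂ : 0 ≤ ∫ x in t / 3..2 * t / 3, g x :=
    intervalIntegral.integral_nonneg (by linarith) fun x _ => hg₀ x
  linarith

theorem pow_mul_exp_neg_le_factorial {y : ℝ} (hy : 0 ≤ y) (m : ℕ) : y ^ m * exp (-y) ≤ m ! := by
  have := pow_div_factorial_le_exp y hy m
  rw [div_le_iff₀ (by positivity)] at this
  rw [← le_div_iff₀ (exp_pos _), exp_neg, div_inv_eq_mul]
  linarith

theorem mul_pow_mul_exp_le {A N I₁ I₂ t σ : ℝ} (n : ℕ) (hA : 0 ≤ A) (hN : 0 ≤ N) (hI₁ : 0 ≤ I₁)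
    (ht : 0 < t) (hσ : 0 < σ) (hNI : t * N ^ 2 ≤ A * I₂) (hI : I₁ ^ 2 ≤ t * I₂) :
    N * I₁ ^ n * exp (-(σ ^ 2 / 2) * I₂)
      ≤ √(A * (n + 1)!) * t ^ (((n : ℝ) - 1) / 2) / σ ^ (n + 1) := by
  have hI₂ : 0 ≤ I₂ := by nlinarith
  have hfact := pow_mul_exp_neg_le_factorial (by positivity : 0 ≤ σ ^ 2 * I₂) (n + 1)
  have hrpow : (t ^ (((n : ℝ) - 1) / 2)) ^ 2 * t = t ^ n := by
    rw [← rpow_natCast _ 2, ← rpow_mul ht.le, ← rpow_add_one ht.ne', ← rpow_natCast]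
    congr 1
    push_cast
    ring
  rw [← pow_le_pow_iff_left₀ (by positivity) (by positivity) two_ne_zero,
    ← mul_le_mul_iff_of_pos_right (by positivity : 0 < t * σ ^ (2 * (n + 1)))]
  calc (N * I₁ ^ n * exp (-(σ ^ 2 / 2) * I₂)) ^ 2 * (t * σ ^ (2 * (n + 1)))
      = (t * N ^ 2) * (I₁ ^ 2) ^ n * σ ^ (2 * (n + 1)) * exp (-(σ ^ 2 * I₂)) := by
        rw [mul_pow, mul_pow, ← exp_nat_mul, ← pow_mul, ← pow_mul]; ring_nf
    _ ≤ (A * I₂) * (t * I₂) ^ n * σ ^ (2 * (n + 1)) * exp (-(σ ^ 2 * I₂)) := by gcongr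
    _ = A * t ^ n * ((σ ^ 2 * I₂) ^ (n + 1) * exp (-(σ ^ 2 * I₂))) := by ring
    _ ≤ A * t ^ n * (n + 1)! := by gcongr
    _ = _ := by
        rw [div_pow, mul_pow, sq_sqrt (by positivity), ← pow_mul, ← hrpow]
        field_simp
        ring

/-- hypoelliptic bound
`|ξ(t)| (∫₀^t |ξ(r)| dr)ⁿ exp(-(σ²/2)∫₀^t |ξ(r)|² dr) ≤ Cₙ t^{(n-1)/2}/σ^{n+1}`,
where `ξ(r) = (ξ - k/λ)e^{-λr} + k/λ` and `Cₙ` depends only on `n` and `λ`. -/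
theorem stmt_8 (d : ℕ) (lam : ℝ) (hlam : 0 < lam) (n : ℕ) :
    ∃ C : ℝ, 0 < C ∧
      ∀ (sig t : ℝ), 0 < sig → 0 < t →
        ∀ (k ξ : EuclideanSpace ℝ (Fin d)) (Ξ : ℝ → EuclideanSpace ℝ (Fin d)),
          (∀ r, Ξ r = Real.exp (-lam * r) • (ξ - lam⁻¹ • k) + lam⁻¹ • k) →
          ‖Ξ t‖ * (∫ r in (0:ℝ)..t, ‖Ξ r‖) ^ n *
              Real.exp (-(sig ^ 2 / 2) * ∫ r in (0:ℝ)..t, ‖Ξ r‖ ^ 2)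
            ≤ C * t ^ (((n : ℝ) - 1) / 2) / sig ^ (n + 1) := by
  refine ⟨√(24 * (n + 1)!), by positivity, fun sig t hsig ht k ξ Ξ hΞ => ?_⟩
  have hΞc : Continuous Ξ := by
    rw [funext hΞ]
    fun_prop
  have hpt : ∀ s ∈ Icc 0 (t / 3), ‖Ξ t‖ ^ 2 ≤ 2 * ‖Ξ s‖ ^ 2 + 8 * ‖Ξ (s + 2 * t / 3)‖ ^ 2 := by
    rintro s ⟨hs₀, hs⟩
    have h := norm_exp_smul_add_le (ξ - lam⁻¹ • k) (lam⁻¹ • k) hlam.le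
      (r₁ := s) (r₂ := s + 2 * t / 3) (r₃ := t) (by linarith) (by linarith)
    rw [← hΞ, ← hΞ, ← hΞ] at h
    nlinarith [norm_nonneg (Ξ t), sq_nonneg (‖Ξ s‖ - 2 * ‖Ξ (s + 2 * t / 3)‖)]
  exact mul_pow_mul_exp_le n (by norm_num) (norm_nonneg _)
    (intervalIntegral.integral_nonneg ht.le fun r _ => norm_nonneg _) ht hsig
    (mul_le_integral_of_le_add_shift (hΞc.norm.pow 2) (fun _ => sq_nonneg _) ht.le hpt)
    (by simpa using sq_integral_le_mul_integral_sq hΞc.norm ht.le)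
end

section
/- Define g : (0,1) → ℝ by g(x) = (1−x)^{3/2} / ( (1+x)·(−2 log x − (1−x)(3−x)) )^{1/2}. Then g is nondecreasing on (0,1), g(x) → 0 as x → 0⁺, g(x) → √3/2 as x → 1⁻, and consequently g(x) ≤ √3/2 for all x ∈ (0,1). -/
/-!
Write `g = gInvSq^(-1/2)` with `gInvSq x = (1 + x) D(x) / (1 - x)³`,
`D(x) = -2 log x - (1 - x)(3 - x)`. Then `gInvSq' = G / (1 - x)⁴` with
`G(x) = -(8 + 4x) log x - 2/x + 10x - 8`; both `G` and `G'` vanish at `1` and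
`G'' = -4 (x - 1)² / x³ ≤ 0`, so `G ≤ 0` on `(0, 1]` and `g` is monotone.
At `0⁺`, `D → ∞`. At `1⁻`, `D = 2R + (2/3)(1 - x)³`, where `R` is the remainder of the cubic
Taylor polynomial of `-log` at `1` and `0 ≤ R ≤ (1 - x)⁴ / x`; hence `gInvSq → 2 · 2/3 = 4/3`.
-/

open Real Set Filter

noncomputable def gStmt9 (x : ℝ) : ℝ :=
  (1 - x) ^ ((3 : ℝ) / 2) / ((1 + x) * (-2 * Real.log x - (1 - x) * (3 - x))) ^ ((1 : ℝ) / 2)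

open Topology

section Monotonicity

variable {f f' : ℝ → ℝ} {a b x : ℝ}

theorem antitoneOn_of_hasDerivAt_nonpos' {D : Set ℝ} (hD : Convex ℝ D)
    (hf : ∀ y ∈ D, HasDerivAt f (f' y) y) (hf' : ∀ y ∈ interior D, f' y ≤ 0) :
    AntitoneOn f D :=
  antitoneOn_of_hasDerivWithinAt_nonpos hD
    (fun y hy ↦ (hf y hy).continuousAt.continuousWithinAt)
    (fun y hy ↦ (hf y (interior_subset hy)).hasDerivWithinAt) hf'

theorem le_of_hasDerivAt_nonpos_Ioc (hf : ∀ y ∈ Ioc a b, HasDerivAt f (f' y) y)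
    (hf' : ∀ y ∈ Ioo a b, f' y ≤ 0) (hx : x ∈ Ioc a b) : f b ≤ f x :=
  antitoneOn_of_hasDerivAt_nonpos' (convex_Ioc a b) hf (by simpa using hf') hx
    (right_mem_Ioc.2 (hx.1.trans_le hx.2)) hx.2

theorem ge_of_hasDerivAt_nonneg_Ioc (hf : ∀ y ∈ Ioc a b, HasDerivAt f (f' y) y)
    (hf' : ∀ y ∈ Ioo a b, 0 ≤ f' y) (hx : x ∈ Ioc a b) : f x ≤ f b :=
  neg_le_neg_iff.1 <| le_of_hasDerivAt_nonpos_Ioc (f := fun y ↦ -f y) (f' := fun y ↦ -f' y)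
    (fun y hy ↦ (hf y hy).neg) (fun y hy ↦ neg_nonpos.2 (hf' y hy)) hx

theorem MonotoneOn.le_of_tendsto_nhdsLT {l : ℝ} (hf : MonotoneOn f (Ioo a b))
    (hl : Tendsto f (𝓝[<] b) (𝓝 l)) (hx : x ∈ Ioo a b) : f x ≤ l :=
  ge_of_tendsto hl <| by
    filter_upwards [Ioo_mem_nhdsLT hx.2] with y hy
    exact hf hx ⟨hx.1.trans hy.1, hy.2⟩ hy.1.le

end Monotonicity

noncomputable def logRemainder (x : ℝ) : ℝ :=
  -log x - ((1 - x) + (1 - x) ^ 2 / 2 + (1 - x) ^ 3 / 3)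

theorem hasDerivAt_logRemainder {x : ℝ} (hx : 0 < x) :
    HasDerivAt logRemainder (-(1 - x) ^ 3 / x) x := by
  have h := (hasDerivAt_id' x).const_sub 1
  refine ((hasDerivAt_log hx.ne').neg.sub
    ((h.add ((h.pow 2).div_const 2)).add ((h.pow 3).div_const 3))).congr_deriv ?_
  field_simp
  ring

theorem logRemainder_nonneg {x : ℝ} (hx : x ∈ Ioc 0 1) : 0 ≤ logRemainder x := by
  have h := le_of_hasDerivAt_nonpos_Ioc (fun y hy ↦ hasDerivAt_logRemainder hy.1)
    (fun y hy ↦ div_nonpos_of_nonpos_of_nonneg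
      (neg_nonpos.2 (pow_nonneg (sub_nonneg.2 hy.2.le) 3)) hy.1.le) hx
  simpa [logRemainder] using h

theorem logRemainder_le {x : ℝ} (hx : x ∈ Ioc 0 1) : logRemainder x ≤ (1 - x) ^ 4 / x := by
  have hderiv (y : ℝ) (hy : 0 < y) : HasDerivAt (fun y ↦ (1 - y) ^ 4 / y - logRemainder y)
      (-(1 - y) ^ 3 * (2 * y + 1) / y ^ 2) y := by
    refine ((((hasDerivAt_id' y).const_sub 1).pow 4).div (hasDerivAt_id' y) hy.ne' |>.sub
      (hasDerivAt_logRemainder hy)).congr_deriv ?_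
    simp only [Pi.pow_apply]
    field_simp
    ring
  have h := le_of_hasDerivAt_nonpos_Ioc (fun y hy ↦ hderiv y hy.1) (fun y hy ↦ by
    have := pow_nonneg (sub_nonneg.2 hy.2.le) 3
    exact div_nonpos_of_nonpos_of_nonneg (by nlinarith [hy.1]) (sq_nonneg y)) hx
  simpa [logRemainder] using h

theorem tendsto_logRemainder_div_cube :
    Tendsto (fun x ↦ logRemainder x / (1 - x) ^ 3) (𝓝[<] 1) (𝓝 0) := by
  have hbound : Tendsto (fun x : ℝ ↦ (1 - x) / x) (𝓝[<] 1) (𝓝 0) := by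
    have : ContinuousAt (fun x : ℝ ↦ (1 - x) / x) 1 := by fun_prop (disch := norm_num)
    simpa using this.tendsto.mono_left nhdsWithin_le_nhds
  refine tendsto_of_tendsto_of_tendsto_of_le_of_le' tendsto_const_nhds hbound ?_ ?_ <;>
    filter_upwards [Ioo_mem_nhdsLT one_pos] with x hx
  · exact div_nonneg (logRemainder_nonneg ⟨hx.1, hx.2.le⟩) (pow_nonneg (sub_nonneg.2 hx.2.le) 3)
  · rw [div_le_iff₀ (pow_pos (sub_pos.2 hx.2) 3)]
    calc logRemainder x ≤ (1 - x) ^ 4 / x := logRemainder_le ⟨hx.1, hx.2.le⟩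
      _ = (1 - x) / x * (1 - x) ^ 3 := by ring

noncomputable def gInvSq (x : ℝ) : ℝ :=
  (1 + x) * (-2 * log x - (1 - x) * (3 - x)) / (1 - x) ^ 3

theorem gStmt9_eq_sqrt_inv_gInvSq {x : ℝ} (hx : x ≤ 1) : gStmt9 x = √(gInvSq x)⁻¹ := by
  have h1x : 0 ≤ 1 - x := sub_nonneg.2 hx
  rw [gStmt9, gInvSq, inv_div, Real.sqrt_div (pow_nonneg h1x 3), ← Real.sqrt_eq_rpow,
    show (3 : ℝ) / 2 = (3 : ℕ) * (1 / 2) by norm_num, Real.rpow_mul h1x, Real.rpow_natCast,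
    ← Real.sqrt_eq_rpow]

theorem gInvSq_eq {x : ℝ} (hx : x ≠ 1) :
    gInvSq x = (1 + x) * (2 * (logRemainder x / (1 - x) ^ 3) + 2 / 3) := by
  have : (1 - x) ^ 3 ≠ 0 := pow_ne_zero 3 (sub_ne_zero.2 hx.symm)
  rw [gInvSq, logRemainder]
  field_simp
  ring

theorem gInvSq_pos {x : ℝ} (hx : x ∈ Ioo 0 1) : 0 < gInvSq x := by
  have : 0 ≤ logRemainder x / (1 - x) ^ 3 :=
    div_nonneg (logRemainder_nonneg ⟨hx.1, hx.2.le⟩) (pow_nonneg (sub_nonneg.2 hx.2.le) 3)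
  rw [gInvSq_eq hx.2.ne]
  exact mul_pos (by linarith [hx.1]) (by linarith)

noncomputable def gInvSqDerivNum (x : ℝ) : ℝ :=
  -(8 + 4 * x) * log x - 2 / x + 10 * x - 8

theorem hasDerivAt_gInvSq {x : ℝ} (hx : x ∈ Ioo 0 1) :
    HasDerivAt gInvSq (gInvSqDerivNum x / (1 - x) ^ 4) x := by
  have hx0 : x ≠ 0 := hx.1.ne'
  have h1x : 1 - x ≠ 0 := (sub_pos.2 hx.2).ne'
  have hsub := (hasDerivAt_id' x).const_sub 1
  have hnum := ((hasDerivAt_id' x).const_add 1).mul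
    (((hasDerivAt_log hx0).const_mul (-2)).sub (hsub.mul ((hasDerivAt_id' x).const_sub 3)))
  refine (hnum.div (hsub.pow 3) (pow_ne_zero 3 h1x)).congr_deriv ?_
  simp only [Pi.mul_apply, Pi.sub_apply, Pi.pow_apply, gInvSqDerivNum]
  field_simp
  ring

theorem gInvSqDerivNum_nonpos {x : ℝ} (hx : x ∈ Ioc 0 1) : gInvSqDerivNum x ≤ 0 := by
  set G : ℝ → ℝ := fun y ↦ -4 * log y - 8 / y + 2 / y ^ 2 + 6
  have hG (y : ℝ) (hy : 0 < y) : HasDerivAt G (-4 * (y - 1) ^ 2 / y ^ 3) y := by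
    refine ((((hasDerivAt_log hy.ne').const_mul (-4)).sub
      ((hasDerivAt_const y 8).div (hasDerivAt_id' y) hy.ne')).add
      ((hasDerivAt_const y 2).div ((hasDerivAt_id' y).pow 2) (pow_ne_zero 2 hy.ne'))
      |>.add_const 6).congr_deriv ?_
    simp only [Pi.pow_apply]
    field_simp
    ring
  have hG_nonneg (y : ℝ) (hy : y ∈ Ioc 0 1) : 0 ≤ G y := by
    have := le_of_hasDerivAt_nonpos_Ioc (fun z hz ↦ hG z hz.1)
      (fun z hz ↦ div_nonpos_of_nonpos_of_nonneg (by nlinarith [sq_nonneg (z - 1)])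
        (pow_pos hz.1 3).le) hy
    norm_num [G] at this
    linarith
  have hderiv (y : ℝ) (hy : 0 < y) : HasDerivAt gInvSqDerivNum (G y) y := by
    refine (((((hasDerivAt_id' y).const_mul 4).const_add 8).neg.mul (hasDerivAt_log hy.ne')).sub
      ((hasDerivAt_const y 2).div (hasDerivAt_id' y) hy.ne') |>.add
      ((hasDerivAt_id' y).const_mul 10) |>.sub_const 8).congr_deriv ?_
    simp only [Pi.neg_apply, G]
    field_simp
    ring
  have := ge_of_hasDerivAt_nonneg_Ioc (fun y hy ↦ hderiv y hy.1)
    (fun y hy ↦ hG_nonneg y ⟨hy.1, hy.2.le⟩) hx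
  norm_num [gInvSqDerivNum] at this ⊢
  linarith

theorem antitoneOn_gInvSq : AntitoneOn gInvSq (Ioo 0 1) :=
  antitoneOn_of_hasDerivAt_nonpos' (convex_Ioo 0 1) (fun _ hx ↦ hasDerivAt_gInvSq hx)
    (fun x hx ↦ by
      rw [interior_Ioo] at hx
      exact div_nonpos_of_nonpos_of_nonneg (gInvSqDerivNum_nonpos ⟨hx.1, hx.2.le⟩)
        (pow_nonneg (sub_nonneg.2 hx.2.le) 4))

theorem monotoneOn_gStmt9 : MonotoneOn gStmt9 (Ioo 0 1) := by
  intro x hx y hy hxy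
  rw [gStmt9_eq_sqrt_inv_gInvSq hx.2.le, gStmt9_eq_sqrt_inv_gInvSq hy.2.le]
  exact Real.sqrt_le_sqrt (inv_anti₀ (gInvSq_pos hy) (antitoneOn_gInvSq hx hy hxy))

theorem tendsto_gInvSq_nhdsGT_zero : Tendsto gInvSq (𝓝[>] 0) atTop := by
  have hlog : Tendsto (fun x ↦ -2 * log x - (1 - x) * (3 - x)) (𝓝[>] 0) atTop := by
    have hpoly : Tendsto (fun x : ℝ ↦ -((1 - x) * (3 - x))) (𝓝[>] 0) (𝓝 (-3)) := by
      have : Continuous (fun x : ℝ ↦ -((1 - x) * (3 - x))) := by fun_prop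
      simpa using this.continuousAt.tendsto.mono_left (nhdsWithin_le_nhds (a := 0))
    simpa only [sub_eq_add_neg] using
      (tendsto_log_nhdsGT_zero.const_mul_atBot_of_neg (by norm_num : (-2 : ℝ) < 0)).atTop_add hpoly
  have hfactor : Tendsto (fun x : ℝ ↦ (1 + x) / (1 - x) ^ 3) (𝓝[>] 0) (𝓝 1) := by
    have : ContinuousAt (fun x : ℝ ↦ (1 + x) / (1 - x) ^ 3) 0 := by fun_prop (disch := norm_num)
    simpa using this.tendsto.mono_left nhdsWithin_le_nhds
  refine (hfactor.pos_mul_atTop one_pos hlog).congr fun x ↦ ?_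
  rw [gInvSq, mul_div_right_comm]

theorem tendsto_gInvSq_nhdsLT_one : Tendsto gInvSq (𝓝[<] 1) (𝓝 (4 / 3)) := by
  have hfactor : Tendsto (fun x : ℝ ↦ 1 + x) (𝓝[<] 1) (𝓝 2) := by
    have : Continuous (fun x : ℝ ↦ 1 + x) := by fun_prop
    simpa [one_add_one_eq_two] using
      this.continuousAt.tendsto.mono_left (nhdsWithin_le_nhds (a := 1))
  have hlim := hfactor.mul ((tendsto_logRemainder_div_cube.const_mul 2).add_const (2 / 3))
  refine (hlim.congr' ?_).trans_eq (by norm_num)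
  filter_upwards [self_mem_nhdsWithin] with x hx
  exact (gInvSq_eq (ne_of_lt hx)).symm

theorem tendsto_gStmt9_nhdsGT_zero : Tendsto gStmt9 (𝓝[>] 0) (𝓝 0) := by
  have hlim := tendsto_gInvSq_nhdsGT_zero.inv_tendsto_atTop.sqrt
  rw [Real.sqrt_zero] at hlim
  refine hlim.congr' ?_
  filter_upwards [Ioo_mem_nhdsGT one_pos] with x hx
  exact (gStmt9_eq_sqrt_inv_gInvSq hx.2.le).symm

theorem tendsto_gStmt9_nhdsLT_one : Tendsto gStmt9 (𝓝[<] 1) (𝓝 (√3 / 2)) := by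
  have hlim := (tendsto_gInvSq_nhdsLT_one.inv₀ (by norm_num)).sqrt
  rw [show (4 / 3 : ℝ)⁻¹ = 3 / 2 ^ 2 by norm_num, Real.sqrt_div' _ (by positivity),
    Real.sqrt_sq zero_le_two] at hlim
  refine hlim.congr' ?_
  filter_upwards [self_mem_nhdsWithin] with x hx
  exact (gStmt9_eq_sqrt_inv_gInvSq (le_of_lt hx)).symm

/-- `g` is nondecreasing on `(0,1)`, tends to `0` at `0⁺`, tends to `√3/2`
at `1⁻`, and consequently `g ≤ √3/2` on `(0,1)`. -/
theorem stmt_9 :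
    MonotoneOn gStmt9 (Ioo 0 1) ∧
    Tendsto gStmt9 (nhdsWithin 0 (Ioi 0)) (nhds 0) ∧
    Tendsto gStmt9 (nhdsWithin 1 (Iio 1)) (nhds (Real.sqrt 3 / 2)) ∧
    ∀ x ∈ Ioo (0:ℝ) 1, gStmt9 x ≤ Real.sqrt 3 / 2 :=
  ⟨monotoneOn_gStmt9, tendsto_gStmt9_nhdsGT_zero, tendsto_gStmt9_nhdsLT_one,
    fun _ hx ↦ monotoneOn_gStmt9.le_of_tendsto_nhdsLT tendsto_gStmt9_nhdsLT_one hx⟩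
end

section
/- Define h : (0,1] → ℝ by h(x) = (1−x)(1+5x)/(2x(x+2)) + log x. Then h'(x) = −(1−x)³/(x²(x+2)²) for x ∈ (0,1), h(1) = 0, and hence h(x) ≥ 0 for all x ∈ (0,1]. -/
open Real Set

/-! The derivative of `h = rationalLogGap` is `(x - 1)³ / (x²(x + 2)²)`, which has the sign of
`x - 1`, so `h` decreases on `(0, 1]`, increases on `[1, ∞)`, and has its minimum `h 1 = 0`. -/

noncomputable def rationalLogGap (x : ℝ) : ℝ :=
  (1 - x) * (1 + 5 * x) / (2 * x * (x + 2)) + log x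

theorem rationalLogGap_one : rationalLogGap 1 = 0 := by
  norm_num [rationalLogGap]

theorem hasDerivAt_rationalLogGap {x : ℝ} (hx : x ≠ 0) (hx₂ : x + 2 ≠ 0) :
    HasDerivAt rationalLogGap (-(1 - x) ^ 3 / (x ^ 2 * (x + 2) ^ 2)) x := by
  have hnum := ((hasDerivAt_id' x).const_sub 1).fun_mul
    (((hasDerivAt_id' x).const_mul 5).const_add 1)
  have hden := ((hasDerivAt_id' x).const_mul 2).fun_mul ((hasDerivAt_id' x).add_const 2)
  refine ((hnum.fun_div hden (by positivity)).fun_add (hasDerivAt_log hx)).congr_deriv ?_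
  field_simp
  ring

theorem continuousOn_rationalLogGap : ContinuousOn rationalLogGap (Ioi 0) := fun x hx =>
  (hasDerivAt_rationalLogGap (ne_of_gt hx) (by linarith [mem_Ioi.mp hx])).continuousAt
    |>.continuousWithinAt

theorem antitoneOn_rationalLogGap : AntitoneOn rationalLogGap (Ioc 0 1) := by
  refine antitoneOn_of_hasDerivWithinAt_nonpos
    (f' := fun x => -(1 - x) ^ 3 / (x ^ 2 * (x + 2) ^ 2)) (convex_Ioc 0 1)
    (continuousOn_rationalLogGap.mono Ioc_subset_Ioi_self) (fun x hx => ?_) (fun x hx => ?_)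
  all_goals rw [interior_Ioc] at hx
  · exact (hasDerivAt_rationalLogGap hx.1.ne' (by linarith [hx.1])).hasDerivWithinAt
  · have : 0 ≤ (1 - x) ^ 3 := pow_nonneg (by linarith [hx.2]) 3
    exact div_nonpos_of_nonpos_of_nonneg (by linarith) (by positivity)

theorem monotoneOn_rationalLogGap : MonotoneOn rationalLogGap (Ici 1) := by
  refine monotoneOn_of_hasDerivWithinAt_nonneg
    (f' := fun x => -(1 - x) ^ 3 / (x ^ 2 * (x + 2) ^ 2)) (convex_Ici 1)
    (continuousOn_rationalLogGap.mono fun _ hx => zero_lt_one.trans_le (mem_Ici.mp hx))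
    (fun x hx => ?_) (fun x hx => ?_)
  all_goals rw [interior_Ici] at hx
  · have hx₀ : 0 < x := zero_lt_one.trans hx
    exact (hasDerivAt_rationalLogGap hx₀.ne' (by linarith)).hasDerivWithinAt
  · have : (1 - x) ^ 3 ≤ 0 := Odd.pow_nonpos (by decide) (by linarith [mem_Ioi.mp hx])
    exact div_nonneg (by linarith) (by positivity)

theorem rationalLogGap_nonneg {x : ℝ} (hx : 0 < x) : 0 ≤ rationalLogGap x := by
  rw [← rationalLogGap_one]
  rcases le_total x 1 with hx₁ | hx₁
  · exact antitoneOn_rationalLogGap ⟨hx, hx₁⟩ ⟨one_pos, le_rfl⟩ hx₁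
  · exact monotoneOn_rationalLogGap self_mem_Ici hx₁ hx₁

/-- for `h(x) = (1-x)(1+5x)/(2x(x+2)) + log x` one has
`h'(x) = -(1-x)³/(x²(x+2)²)` on `(0,1)`, `h(1) = 0`, and `h ≥ 0` on `(0,1]`. -/
theorem stmt_10 :
    (∀ x ∈ Ioo (0:ℝ) 1,
      HasDerivAt (fun y : ℝ => (1 - y) * (1 + 5 * y) / (2 * y * (y + 2)) + Real.log y)
        (-(1 - x) ^ 3 / (x ^ 2 * (x + 2) ^ 2)) x) ∧
    ((1 - 1) * (1 + 5 * 1) / (2 * 1 * (1 + 2)) + Real.log 1 = 0) ∧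
    (∀ x ∈ Ioc (0:ℝ) 1,
      0 ≤ (1 - x) * (1 + 5 * x) / (2 * x * (x + 2)) + Real.log x) :=
  ⟨fun x hx => hasDerivAt_rationalLogGap hx.1.ne' (by linarith [hx.1]), rationalLogGap_one,
    fun x hx => rationalLogGap_nonneg hx.1⟩
end
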